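/- Let n ≥ 3 and let k be a unit modulo n of multiplicative order α > 1, where α is even and k^{α/2} ≡ −1 (mod n). Then there exists a minimal prime sequence realizing wt(n,k;α), and deg(n,k;α) ≤ α/2. -/

import Mathlib

/-- The set `Ω(i, λ) = { b₁k^{i₁} + ⋯ + b_r k^{i_r} mod n : |b_j| ≤ λ_j }` in `ℤ/nℤ`. -/
def OmegaSet (n : ℕ) (k : (ZMod n)ˣ) {r : ℕ} (i : Fin r → ℕ) (lam : Fin r → ℕ) :
    Set (ZMod n) :=
  { x | ∃ b : Fin r → ℤ, (∀ j, |b j| ≤ (lam j : ℤ)) ∧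
      x = ∑ j, (b j : ZMod n) * ((k ^ i j : (ZMod n)ˣ) : ZMod n) }

/-- A `sequence`: a strictly decreasing tuple `α−1 ≥ i₁ > i₂ > ⋯ > i_r ≥ 0`. -/
def IsSeq (α : ℕ) {r : ℕ} (i : Fin r → ℕ) : Prop :=
  (∀ j, i j ≤ α - 1) ∧ StrictAnti i

/-- `wt(n, k; i)`: the minimal total weight `λ₁ + ⋯ + λ_r` over tuples `λ`
with `Ω(i,λ) = ℤ/nℤ`. -/
noncomputable def wtSeq (n : ℕ) (k : (ZMod n)ˣ) {r : ℕ} (i : Fin r → ℕ) : ℕ :=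
  sInf { s | ∃ lam : Fin r → ℕ, OmegaSet n k i lam = Set.univ ∧ ∑ j, lam j = s }

/-- The maximal sequence `Δ : α−1 > α−2 > ⋯ > 1 > 0`. -/
def DeltaSeq (α : ℕ) : Fin α → ℕ := fun j => α - 1 - (j : ℕ)

/-- `wt(n, k; α) := wt(n, k; Δ)`. -/
noncomputable def wtAlpha (n : ℕ) (k : (ZMod n)ˣ) (α : ℕ) : ℕ :=
  wtSeq n k (DeltaSeq α)

/-- The degree of a sequence: its largest entry. -/
noncomputable def degSeq {r : ℕ} (i : Fin r → ℕ) : ℕ := sSup (Set.range i)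

/-- The codegree of a sequence: its smallest nonzero entry. -/
noncomputable def codegSeq {r : ℕ} (i : Fin r → ℕ) : ℕ :=
  sInf { v | v ∈ Set.range i ∧ v ≠ 0 }

/-- A minimal prime sequence realizing `wt(n,k;α)`: a reduced sequence (i.e. one
containing `0`) of weight `wt(n,k;α)` such that no proper reduced subsequence
has weight `wt(n,k;α)`. -/
def IsMinimalPrimeSeq (n : ℕ) (k : (ZMod n)ˣ) (α : ℕ) {r : ℕ} (i : Fin r → ℕ) : Prop :=
  IsSeq α i ∧ 0 ∈ Set.range i ∧ wtSeq n k i = wtAlpha n k α ∧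
    ∀ (q : ℕ) (i₀ : Fin q → ℕ), IsSeq α i₀ → 0 ∈ Set.range i₀ →
      Set.range i₀ ⊆ Set.range i → Set.range i₀ ≠ Set.range i →
      wtSeq n k i₀ ≠ wtAlpha n k α

/-- `deg(n,k;α)`: the smallest degree of a minimal prime sequence realizing `wt(n,k;α)`. -/
noncomputable def degNK (n : ℕ) (k : (ZMod n)ˣ) (α : ℕ) : ℕ :=
  sInf { d | ∃ (r : ℕ) (i : Fin r → ℕ), IsMinimalPrimeSeq n k α i ∧ degSeq i = d }

/-!
Since `k^{α/2} = -1`, every power `k^v` equals `±k^{v mod α/2}`. Moving the coefficient of each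
`k^v` in a representation over `Δ` (with that sign) onto `k^{v mod α/2}`, and conversely viewing the
shorter sequence `α/2 - 1 > ⋯ > 0` as a subsequence of `Δ`, shows that both sequences cover
`ℤ/nℤ` with exactly the same total weights, so the shorter one already realizes `wt(n,k;α)`.
Passing to proper reduced subsequences of the same weight strictly decreases the length, so this
descent ends in a minimal prime sequence inside `{0, …, α/2 - 1}`, of degree `< α/2`.
-/

open Finset in
lemma omegaSet_subset_omegaSet_of_signed {n r r' : ℕ} {k : (ZMod n)ˣ} {i : Fin r → ℕ}
    {i' : Fin r' → ℕ} (g : Fin r → Fin r') (ε : Fin r → ℤ) (hε : ∀ j, |ε j| = 1)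
    (hk : ∀ j, ((k ^ i j : (ZMod n)ˣ) : ZMod n) = ε j * ((k ^ i' (g j) : (ZMod n)ˣ) : ZMod n))
    (lam : Fin r → ℕ) :
    OmegaSet n k i lam ⊆ OmegaSet n k i' (fun j' => ∑ j with g j = j', lam j) := by
  rintro _ ⟨b, hb, rfl⟩
  refine ⟨fun j' => ∑ j with g j = j', ε j * b j, fun j' => ?_, ?_⟩
  · push_cast
    calc |∑ j with g j = j', ε j * b j| ≤ ∑ j with g j = j', |ε j * b j| := abs_sum_le_sum_abs _ _
      _ ≤ ∑ j with g j = j', (lam j : ℤ) :=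
        sum_le_sum fun j _ => by rw [abs_mul, hε, one_mul]; exact hb j
  · calc ∑ j, (b j : ZMod n) * ((k ^ i j : (ZMod n)ˣ) : ZMod n)
        = ∑ j, ((ε j * b j : ℤ) : ZMod n) * ((k ^ i' (g j) : (ZMod n)ˣ) : ZMod n) :=
          sum_congr rfl fun j _ => by rw [hk]; push_cast; ring
      _ = ∑ j', ∑ j with g j = j', ((ε j * b j : ℤ) : ZMod n) *
            ((k ^ i' j' : (ZMod n)ˣ) : ZMod n) := by
          rw [← sum_fiberwise univ g]
          refine sum_congr rfl fun j' _ => sum_congr rfl fun j hj => ?_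
          rw [(mem_filter.mp hj).2]
      _ = _ := by simp only [sum_mul, Int.cast_sum]

def admissibleWeights (n : ℕ) (k : (ZMod n)ˣ) {r : ℕ} (i : Fin r → ℕ) : Set ℕ :=
  { s | ∃ lam : Fin r → ℕ, OmegaSet n k i lam = Set.univ ∧ ∑ j, lam j = s }

lemma wtSeq_eq_sInf_admissibleWeights (n : ℕ) (k : (ZMod n)ˣ) {r : ℕ} (i : Fin r → ℕ) :
    wtSeq n k i = sInf (admissibleWeights n k i) := rfl

lemma admissibleWeights_subset_of_signed {n r r' : ℕ} {k : (ZMod n)ˣ} {i : Fin r → ℕ}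
    {i' : Fin r' → ℕ}
    (h : ∀ v ∈ Set.range i, ∃ w ∈ Set.range i', ∃ ε : ℤ, |ε| = 1 ∧
      ((k ^ v : (ZMod n)ˣ) : ZMod n) = ε * ((k ^ w : (ZMod n)ˣ) : ZMod n)) :
    admissibleWeights n k i ⊆ admissibleWeights n k i' := by
  rintro _ ⟨lam, hlam, rfl⟩
  choose w hw ε hε hk using fun j => h (i j) ⟨j, rfl⟩
  choose g hg using hw
  refine ⟨_, Set.eq_univ_of_univ_subset ?_, Finset.sum_fiberwise Finset.univ g lam⟩
  rw [← hlam]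
  exact omegaSet_subset_omegaSet_of_signed g ε hε (fun j => by rw [hg, hk]) lam

lemma pow_eq_neg_one_pow_mul_pow_mod {M : Type*} [Monoid M] [HasDistribNeg M] {x : M} {m : ℕ}
    (hx : x ^ m = -1) (v : ℕ) : x ^ v = (-1) ^ (v / m) * x ^ (v % m) := by
  conv_lhs => rw [← Nat.div_add_mod v m, pow_add, pow_mul, hx]

lemma range_deltaSeq (m : ℕ) : Set.range (DeltaSeq m) = Set.Iio m := by
  ext v
  constructor
  · rintro ⟨j, rfl⟩
    have := j.isLt
    simp only [DeltaSeq, Set.mem_Iio]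
    omega
  · intro hv
    simp only [Set.mem_Iio] at hv
    exact ⟨⟨m - 1 - v, by omega⟩, by simp only [DeltaSeq]; omega⟩

lemma isSeq_deltaSeq {m α : ℕ} (h : m ≤ α) : IsSeq α (DeltaSeq m) := by
  refine ⟨fun j => ?_, fun a b hab => ?_⟩
  · have := j.isLt
    simp only [DeltaSeq]
    omega
  · have := b.isLt
    simp only [DeltaSeq]
    omega

lemma wtSeq_deltaSeq_eq_wtAlpha {n m : ℕ} {k : (ZMod n)ˣ} (α : ℕ) (hk : k ^ m = -1)
    (hm : 0 < m) (hmα : m ≤ α) : wtSeq n k (DeltaSeq m) = wtAlpha n k α := by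
  rw [wtAlpha, wtSeq_eq_sInf_admissibleWeights, wtSeq_eq_sInf_admissibleWeights]
  congr 1
  apply (admissibleWeights_subset_of_signed _).antisymm (admissibleWeights_subset_of_signed _)
  · intro v hv
    rw [range_deltaSeq] at hv ⊢
    exact ⟨v, lt_of_lt_of_le hv hmα, 1, abs_one, by rw [Int.cast_one, one_mul]⟩
  · intro v _
    rw [range_deltaSeq]
    refine ⟨v % m, Nat.mod_lt v hm, (-1) ^ (v / m), by simp, ?_⟩
    rw [pow_eq_neg_one_pow_mul_pow_mod hk v]
    push_cast
    rfl

lemma IsSeq.ncard_range {α r : ℕ} {i : Fin r → ℕ} (hi : IsSeq α i) : (Set.range i).ncard = r := by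
  rw [Set.ncard_range_of_injective hi.2.injective, Nat.card_eq_fintype_card, Fintype.card_fin]

lemma exists_isMinimalPrimeSeq_subset {n α r : ℕ} {k : (ZMod n)ˣ} {i : Fin r → ℕ}
    (hi : IsSeq α i) (h0 : 0 ∈ Set.range i) (hw : wtSeq n k i = wtAlpha n k α) :
    ∃ (q : ℕ) (i₀ : Fin q → ℕ), IsMinimalPrimeSeq n k α i₀ ∧ Set.range i₀ ⊆ Set.range i := by
  induction r using Nat.strong_induction_on with
  | _ r ih =>
    by_cases hmin : ∀ (q : ℕ) (i₀ : Fin q → ℕ), IsSeq α i₀ → 0 ∈ Set.range i₀ →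
        Set.range i₀ ⊆ Set.range i → Set.range i₀ ≠ Set.range i → wtSeq n k i₀ ≠ wtAlpha n k α
    · exact ⟨r, i, ⟨hi, h0, hw, hmin⟩, subset_rfl⟩
    push Not at hmin
    obtain ⟨q, i₀, hi₀, h0₀, hsub, hne, hw₀⟩ := hmin
    have hq : q < r := by
      rw [← hi₀.ncard_range, ← hi.ncard_range]
      exact Set.ncard_lt_ncard (hsub.ssubset_of_ne hne) (Set.finite_range i)
    obtain ⟨q', i', hmin', hsub'⟩ := ih q hq hi₀ h0₀ hw₀
    exact ⟨q', i', hmin', hsub'.trans hsub⟩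

lemma degSeq_lt_of_range_subset_Iio {r m : ℕ} {i : Fin r → ℕ} (hne : (Set.range i).Nonempty)
    (h : Set.range i ⊆ Set.Iio m) : degSeq i < m :=
  h (Nat.sSup_mem hne (Set.finite_range i).bddAbove)

theorem degNK_le_half_order_general (n : ℕ) (k : (ZMod n)ˣ) (α : ℕ)
    (hα2 : 2 ≤ α)
    (hneg : k ^ (α / 2) = (-1 : (ZMod n)ˣ)) :
    (∃ (r : ℕ) (i : Fin r → ℕ), IsMinimalPrimeSeq n k α i) ∧
    degNK n k α ≤ α / 2 := by
  have hpos : 0 < α / 2 := by omega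
  obtain ⟨q, i₀, hmin, hsub⟩ := exists_isMinimalPrimeSeq_subset
    (isSeq_deltaSeq (Nat.div_le_self α 2))
    (by rw [range_deltaSeq]; exact hpos)
    (wtSeq_deltaSeq_eq_wtAlpha α hneg hpos (Nat.div_le_self α 2))
  refine ⟨⟨q, i₀, hmin⟩, ?_⟩
  calc degNK n k α ≤ degSeq i₀ := Nat.sInf_le ⟨q, i₀, hmin, rfl⟩
    _ ≤ α / 2 :=
      (degSeq_lt_of_range_subset_Iio ⟨0, hmin.2.1⟩ (hsub.trans (range_deltaSeq _).subset)).le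

/-- If `α = ord(k)` is even and `k^{α/2} ≡ −1 (mod n)`, then there is a minimal
prime sequence realizing `wt(n,k;α)`, and `deg(n,k;α) ≤ α/2`. -/
theorem degNK_le_half_order (n : ℕ) (hn : 3 ≤ n) (k : (ZMod n)ˣ) (α : ℕ)
    (hα : orderOf k = α) (hα2 : 2 ≤ α) (heven : Even α)
    (hneg : k ^ (α / 2) = (-1 : (ZMod n)ˣ)) :
    (∃ (r : ℕ) (i : Fin r → ℕ), IsMinimalPrimeSeq n k α i) ∧
    degNK n k α ≤ α / 2 :=
  degNK_le_half_order_general n k α hα2 hneg
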